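/- Let c, α > 0 be real numbers with p = c·Q^{−α} satisfying 0 < p < 1. Then: (a) for each i ∈ {1,…,m}, E[V_i] = c·Q^{1−α}; and (b) for each integer u with ⌈(k+1)/2⌉ ≤ u ≤ m, setting j = 2u − k, E[X_u] ≤ c^j · (m! / (j!·(u−j)!·(m−u)!)) · Q^{(1−α)·j − 1}. -/

import Mathlib

open scoped Classical
noncomputable section

variable {F : Type} [Field F]

/-- Projective points of `F^k`. -/
abbrev Pt (F : Type) [Field F] (k : ℕ) := Projectivization F (Fin k → F)

/-- Linear span of a set of projective points. -/
def pspan {k : ℕ} (T : Set (Pt F k)) : Submodule F (Fin k → F) :=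
  ⨆ x ∈ T, x.submodule

/-- A finite set of projective points is dependent if the dimension of its linear span is
at most its cardinality minus one. -/
def Dep {k : ℕ} (T : Finset (Pt F k)) : Prop :=
  Module.finrank F (pspan (T : Set (Pt F k))) + 1 ≤ T.card

/-- A circuit is a dependent set that is minimal with respect to inclusion. -/
def IsCircuit {k : ℕ} (T : Finset (Pt F k)) : Prop :=
  Dep T ∧ ∀ T' ⊂ T, ¬ Dep T'

/-- A crossing circuit (for the line configuration `L`): a circuit contained in the union
of the lines which contains at most one point on each line. -/
def CrossingCircuit {k m : ℕ} (L : Fin m → Submodule F (Fin k → F))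
    (T : Finset (Pt F k)) : Prop :=
  IsCircuit T ∧ (∀ x ∈ T, ∃ i, x.submodule ≤ L i) ∧
    ∀ i, (T.filter fun x => x.submodule ≤ L i).card ≤ 1

/-- Weight of the subset `Γ` of `ΩF` under the product Bernoulli(`p`) measure on the
subsets of `ΩF`. -/
def bwt (p : ℝ) {k : ℕ} (ΩF Γ : Finset (Pt F k)) : ℝ :=
  p ^ Γ.card * (1 - p) ^ (ΩF.card - Γ.card)

/-- Expectation of the random variable `Y` under the product Bernoulli(`p`) measure `μ_p`
on the subsets of `ΩF`. -/
def expec (p : ℝ) {k : ℕ} (ΩF : Finset (Pt F k)) (Y : Finset (Pt F k) → ℝ) : ℝ :=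
  ∑ Γ ∈ ΩF.powerset, bwt p ΩF Γ * Y Γ

/-- Probability of the event `E` under the product Bernoulli(`p`) measure `μ_p` on the
subsets of `ΩF`. -/
def prob (p : ℝ) {k : ℕ} (ΩF : Finset (Pt F k)) (E : Finset (Pt F k) → Prop) : ℝ :=
  ∑ Γ ∈ ΩF.powerset.filter E, bwt p ΩF Γ

/-- `V_i(Γ)`: the number of points of `Γ` on the line `L`. -/
def Vline {k : ℕ} (L : Submodule F (Fin k → F)) (Γ : Finset (Pt F k)) : ℕ :=
  (Γ.filter fun x => x.submodule ≤ L).card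

/-- `X_u(Γ)`: the number of pairs `(D, J)` with `D ⊆ Ω` a crossing circuit of size `u` and
`J ⊆ D ∩ Γ` of size `2u - k`. -/
def Xu {k m : ℕ} (L : Fin m → Submodule F (Fin k → F)) (u : ℕ)
    (Γ : Finset (Pt F k)) : ℕ :=
  Set.ncard {DJ : Finset (Pt F k) × Finset (Pt F k) |
    CrossingCircuit L DJ.1 ∧ DJ.1.card = u ∧
    DJ.2 ⊆ DJ.1 ∩ Γ ∧ DJ.2.card = 2 * u - k}

/-- `X = ∑_{u = ⌈(k+1)/2⌉}^{m} X_u`. -/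
def Xtot {k m : ℕ} (L : Fin m → Submodule F (Fin k → F)) (Γ : Finset (Pt F k)) : ℕ :=
  ∑ u ∈ Finset.Icc ((k + 2) / 2) m, Xu L u Γ


/-!
By linearity of expectation both parts are counting statements: `E[V_i]` is `p` times the
`q + 1` points of a line, and `E[X_u]` is `p ^ j` times the number of pairs `(D, J)`, that is
`C(u, j)` times the number of crossing circuits of size `u`. A crossing circuit `D` meeting the
set `S` of `u` lines yields, from its (full-support) linear relation, a nonzero vector of the
kernel of `(a, b) ↦ ∑_{i ∈ S} (a_i P_i + b_i Q_i)`, and `D` is recovered from the projective point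
of that vector. By general position this map to `F^k` is surjective, so its kernel has
dimension `j = 2u - k`: at most `(q^j - 1)/(q - 1) ≤ (q + 1)^(j - 1)` crossing circuits meet
exactly the lines `S`, and there are `C(m, u)` choices of `S`.
-/

open Finset
open scoped LinearAlgebra.Projectivization

theorem sum_powerset_bernoulli_superset {α R : Type*} [CommRing R] (p : R) {s J : Finset α}
    (hJ : J ⊆ s) :
    ∑ Γ ∈ s.powerset with J ⊆ Γ, p ^ #Γ * (1 - p) ^ (#s - #Γ) = p ^ #J := by
  have hIcc : {Γ ∈ s.powerset | J ⊆ Γ} = Icc J s := by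
    ext Γ
    simp [and_comm]
  have hdisj : ∀ Γ ∈ (s \ J).powerset, Disjoint J Γ := fun Γ hΓ =>
    disjoint_of_subset_right (mem_powerset.1 hΓ) disjoint_sdiff
  rw [hIcc, Icc_eq_image_powerset hJ, sum_image fun Γ hΓ Γ' hΓ' h => by
    rw [← union_sdiff_cancel_left (hdisj Γ hΓ), ← union_sdiff_cancel_left (hdisj Γ' hΓ'),
      show J ∪ Γ = J ∪ Γ' from h]]
  calc ∑ Γ ∈ (s \ J).powerset, p ^ #(J ∪ Γ) * (1 - p) ^ (#s - #(J ∪ Γ))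
      = ∑ Γ ∈ (s \ J).powerset, p ^ #J * (p ^ #Γ * (1 - p) ^ (#(s \ J) - #Γ)) := by
        refine sum_congr rfl fun Γ hΓ => ?_
        rw [card_union_of_disjoint (hdisj Γ hΓ), card_sdiff_of_subset hJ, Nat.sub_add_eq,
          pow_add, mul_assoc]
    _ = p ^ #J := by
        rw [← mul_sum, sum_pow_mul_eq_add_pow, add_sub_cancel, one_pow, mul_one]

theorem expec_eq_sum_of_eq_card_filter (p : ℝ) {k : ℕ} (ΩF : Finset (Pt F k)) {β : Type*}
    (T : Finset β) (g : β → Finset (Pt F k)) (hg : ∀ t ∈ T, g t ⊆ ΩF)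
    (Y : Finset (Pt F k) → ℝ) (hY : ∀ Γ ⊆ ΩF, Y Γ = #{t ∈ T | g t ⊆ Γ}) :
    expec p ΩF Y = ∑ t ∈ T, p ^ #(g t) := by
  calc expec p ΩF Y
      = ∑ Γ ∈ ΩF.powerset, ∑ t ∈ T, if g t ⊆ Γ then bwt p ΩF Γ else 0 := by
        refine sum_congr rfl fun Γ hΓ => ?_
        rw [hY Γ (mem_powerset.1 hΓ), card_filter, Nat.cast_sum, mul_sum]
        simp
    _ = ∑ t ∈ T, p ^ #(g t) := by
        rw [sum_comm]
        refine sum_congr rfl fun t ht => ?_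
        rw [← sum_filter, ← sum_powerset_bernoulli_superset p (hg t ht)]
        rfl

theorem expec_Vline (p : ℝ) {k : ℕ} (ΩF : Finset (Pt F k)) (W : Submodule F (Fin k → F)) :
    expec p ΩF (fun Γ => (Vline W Γ : ℝ)) = #{x ∈ ΩF | x.submodule ≤ W} * p := by
  rw [expec_eq_sum_of_eq_card_filter p ΩF {x ∈ ΩF | x.submodule ≤ W} singleton
    (fun x hx => singleton_subset_iff.2 (mem_filter.1 hx).1)]
  · simp
  · intro Γ hΓ
    rw [Vline]
    congr 2
    ext x
    simp only [mem_filter, singleton_subset_iff]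
    exact ⟨fun h => ⟨⟨hΓ h.1, h.2⟩, h.1⟩, fun h => ⟨h.2, h.1.2⟩⟩

theorem expec_Xu (p : ℝ) {k m : ℕ} {L : Fin m → Submodule F (Fin k → F)} {ΩF : Finset (Pt F k)}
    (hΩF : ∀ x i, x.submodule ≤ L i → x ∈ ΩF) (u : ℕ) :
    expec p ΩF (fun Γ => (Xu L u Γ : ℝ)) =
      #{D ∈ ΩF.powerset | CrossingCircuit L D ∧ #D = u} * u.choose (2 * u - k) *
        p ^ (2 * u - k) := by
  set C := {D ∈ ΩF.powerset | CrossingCircuit L D ∧ #D = u}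
  set pairs := (C.sigma fun D => D.powersetCard (2 * u - k)).map
    (Equiv.sigmaEquivProd _ _).toEmbedding
  have hmem : ∀ DJ, DJ ∈ pairs ↔
      CrossingCircuit L DJ.1 ∧ #DJ.1 = u ∧ DJ.2 ⊆ DJ.1 ∧ #DJ.2 = 2 * u - k := by
    rintro ⟨D, J⟩
    simp only [pairs, C, mem_map_equiv, mem_sigma, mem_filter, mem_powerset, mem_powersetCard,
      Equiv.sigmaEquivProd_symm_apply]
    exact ⟨fun h => ⟨h.1.2.1, h.1.2.2, h.2⟩, fun h =>
      ⟨⟨fun x hx => let ⟨i, hi⟩ := h.1.2.1 x hx; hΩF x i hi, h.1, h.2.1⟩, h.2.2⟩⟩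
  refine (expec_eq_sum_of_eq_card_filter p ΩF pairs Prod.snd ?_ _ ?_).trans ?_
  · intro DJ hDJ x hx
    obtain ⟨hD, -, hJD, -⟩ := (hmem DJ).1 hDJ
    obtain ⟨i, hi⟩ := hD.2.1 x (hJD hx)
    exact hΩF x i hi
  · intro Γ _
    rw [Xu, ← Set.ncard_coe_finset]
    congr 2
    ext DJ
    simp only [Set.mem_ofPred_eq, coe_filter, hmem, subset_inter_iff]
    tauto
  · rw [sum_congr rfl fun DJ hDJ => by rw [((hmem DJ).1 hDJ).2.2.2], sum_const, card_map,
      card_sigma, sum_congr rfl fun D hD => by rw [card_powersetCard, (mem_filter.1 hD).2.2],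
      sum_const, nsmul_eq_mul, smul_eq_mul]
    push_cast
    ring

namespace Projectivization

variable {K V : Type*} [Field K] [AddCommGroup V] [Module K V]

theorem range_map_subtype (W : Submodule K V) :
    Set.range (map W.subtype W.injective_subtype) = {x | x.submodule ≤ W} := by
  ext x
  simp only [Set.mem_range, Set.mem_ofPred_eq]
  constructor
  · rintro ⟨y, rfl⟩
    induction y using Projectivization.ind with
    | h v hv => simp [map_mk, submodule_mk, Submodule.span_singleton_le_iff_mem]
  · intro hx
    rw [submodule_eq, Submodule.span_singleton_le_iff_mem] at hx
    refine ⟨mk K ⟨x.rep, hx⟩ fun h => x.rep_nonzero (congrArg Subtype.val h), ?_⟩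
    rw [map_mk]
    exact mk_rep x

theorem card_points_of_finrank_two [Finite K] {W : Submodule K V}
    (hW : Module.finrank K W = 2) (s : Finset (ℙ K V)) (hs : ∀ x, x ∈ s ↔ x.submodule ≤ W) :
    s.card = Nat.card K + 1 := by
  have hrange : (s : Set (ℙ K V)) = Set.range (map W.subtype W.injective_subtype) := by
    ext x
    simp [range_map_subtype, hs]
  rw [← Set.ncard_coe_finset, hrange, ← Nat.card_coe_set_eq,
    Nat.card_range_of_injective (map_injective _ _), card_of_finrank_two K W hW]

end Projectivization

theorem pspan_eq_span_range {k : ℕ} (D : Finset (Pt F k)) :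
    pspan (D : Set (Pt F k)) = Submodule.span F (Set.range fun x : D => (x : Pt F k).rep) := by
  rw [Submodule.span_range_eq_iSup, pspan, iSup_subtype']
  exact iSup_congr fun x => (x : Pt F k).submodule_eq

theorem dep_iff_not_linearIndepOn {k : ℕ} (D : Finset (Pt F k)) :
    Dep D ↔ ¬ LinearIndepOn F Projectivization.rep (D : Set (Pt F k)) := by
  have hle := finrank_range_le_card (R := F) fun x : D => (x : Pt F k).rep
  rw [Dep, pspan_eq_span_range]
  change _ ↔ ¬ LinearIndependent F fun x : D => (x : Pt F k).rep
  rw [linearIndependent_iff_card_eq_finrank_span]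
  simp only [Set.finrank, Fintype.card_coe] at hle ⊢
  omega

theorem IsCircuit.exists_relation {k : ℕ} {D : Finset (Pt F k)} (hD : IsCircuit D) :
    ∃ g : Pt F k → F, ∑ x ∈ D, g x • x.rep = 0 ∧ ∀ x ∈ D, g x ≠ 0 := by
  obtain ⟨g, hg, x₀, hx₀, hgx₀⟩ :=
    not_linearIndepOn_finset_iff.1 ((dep_iff_not_linearIndepOn D).1 hD.1)
  refine ⟨g, hg, fun y hy hgy => hD.2 {x ∈ D | g x ≠ 0} ?_ ?_⟩
  · exact ssubset_iff_of_subset (filter_subset _ _) |>.2 ⟨y, hy, by simp [hgy]⟩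
  · refine (dep_iff_not_linearIndepOn _).2 (not_linearIndepOn_finset_iff.2 ⟨g, ?_, x₀, ?_, hgx₀⟩)
    · rw [sum_filter_of_ne (p := fun x => g x ≠ 0) fun x _ h hgx => h (by rw [hgx, zero_smul]),
        hg]
    · exact mem_filter.2 ⟨hx₀, hgx₀⟩

def InGeneralPosition {ι : Type*} {k : ℕ} (v : ι → Fin k → F) : Prop :=
  ∀ T : Finset ι, T.card ≤ k → LinearIndependent F (fun t : {x // x ∈ T} => v t)

namespace InGeneralPosition

variable {ι : Type*} {k : ℕ} {v : ι → Fin k → F}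

theorem span_image_eq_top (hv : InGeneralPosition v) {T : Finset ι} (hT : k ≤ T.card) :
    Submodule.span F (v '' T) = ⊤ := by
  obtain ⟨T', hT'T, hT'⟩ := exists_subset_card_eq hT
  have hspan : Submodule.span F (Set.range fun t : {x // x ∈ T'} => v t) = ⊤ :=
    (hv T' hT'.le).span_eq_top_of_card_eq_finrank' (by simp [hT'])
  rw [eq_top_iff, ← hspan]
  refine Submodule.span_mono ?_
  rintro _ ⟨t, rfl⟩
  exact ⟨t, hT'T t.2, rfl⟩

theorem finrank_span_pair (hv : InGeneralPosition v) (hk : 2 ≤ k) {a b : ι} (hab : a ≠ b) :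
    Module.finrank F (Submodule.span F {v a, v b}) = 2 := by
  have hind := hv {a, b} (by rw [card_pair hab]; exact hk)
  have hrange : (Set.range fun t : {x // x ∈ ({a, b} : Finset ι)} => v t) = {v a, v b} := by
    ext
    simp [eq_comm]
  rw [← hrange, finrank_span_eq_card hind, Fintype.card_coe, card_pair hab]

end InGeneralPosition

section LineConfiguration

variable {k m : ℕ} (P Q : Fin m → Fin k → F)

def lineComb (S : Finset (Fin m)) : (S ⊕ S → F) →ₗ[F] (Fin k → F) :=
  Fintype.linearCombination F (Sum.elim (fun i : S => P i) (fun i : S => Q i))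

theorem lineComb_surjective (hgen : InGeneralPosition (Sum.elim P Q)) {S : Finset (Fin m)}
    (hS : k ≤ 2 * S.card) : Function.Surjective (lineComb P Q S) := by
  have hcomp : Sum.elim (fun i : S => P i) (fun i : S => Q i)
      = Sum.elim P Q ∘ Sum.map Subtype.val Subtype.val := by
    ext (_ | _) <;> rfl
  rw [← LinearMap.range_eq_top, lineComb, Fintype.range_linearCombination, hcomp,
    Set.range_comp]
  have hrange : Set.range (Sum.map (Subtype.val : S → Fin m) (Subtype.val : S → Fin m)) =
      (S.disjSum S : Set (Fin m ⊕ Fin m)) := by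
    simp [Set.ext_iff, mem_disjSum]
  rw [hrange]
  exact hgen.span_image_eq_top (by rw [card_disjSum]; omega)

theorem finrank_ker_lineComb (hgen : InGeneralPosition (Sum.elim P Q)) {S : Finset (Fin m)}
    (hS : k ≤ 2 * S.card) :
    Module.finrank F (LinearMap.ker (lineComb P Q S)) = 2 * S.card - k := by
  have h := LinearMap.finrank_range_add_finrank_ker (lineComb P Q S)
  rw [LinearMap.range_eq_top.2 (lineComb_surjective P Q hgen hS), finrank_top,
    Module.finrank_fin_fun, Module.finrank_pi, Fintype.card_sum, Fintype.card_coe] at h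
  omega

def linePart (S : Finset (Fin m)) (w : S ⊕ S → F) (i : S) : Fin k → F :=
  w (.inl i) • P i + w (.inr i) • Q i

theorem lineComb_apply (S : Finset (Fin m)) (w : S ⊕ S → F) :
    lineComb P Q S w = ∑ i, linePart P Q S w i := by
  simp [lineComb, linePart, Fintype.linearCombination_apply, Fintype.sum_sum_type,
    sum_add_distrib]

theorem linePart_smul (S : Finset (Fin m)) (t : F) (w : S ⊕ S → F) (i : S) :
    linePart P Q S (t • w) i = t • linePart P Q S w i := by
  simp [linePart, smul_add, smul_smul]

def IsLineRelation (ρ : Pt F k → Fin m) (S : Finset (Fin m)) (D : Finset (Pt F k))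
    (w : S ⊕ S → F) : Prop :=
  ∀ x ∈ D, ∃ hx : ρ x ∈ S, ∃ c : F, c ≠ 0 ∧ linePart P Q S w ⟨ρ x, hx⟩ = c • x.rep

variable {P Q} {ρ : Pt F k → Fin m} {S : Finset (Fin m)} {D D' : Finset (Pt F k)}
  {w : S ⊕ S → F}

theorem IsLineRelation.ne_zero (hw : IsLineRelation P Q ρ S D w) (hD : D.Nonempty) : w ≠ 0 := by
  rintro rfl
  obtain ⟨x, hx⟩ := hD
  obtain ⟨_, c, hc, h⟩ := hw x hx
  exact smul_ne_zero hc x.rep_nonzero (by simpa [linePart] using h.symm)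

theorem IsLineRelation.subset_of_smul (hw : IsLineRelation P Q ρ S D w) {t : F}
    (hw' : IsLineRelation P Q ρ S D' (t • w)) (hS : S ⊆ D'.image ρ) : D ⊆ D' := by
  intro x hx
  obtain ⟨hxS, c, hc, hcx⟩ := hw x hx
  obtain ⟨x', hx', hρx'⟩ := mem_image.1 (hS hxS)
  obtain ⟨hx'S, c', hc', hcx'⟩ := hw' x' hx'
  rw [show (⟨ρ x', hx'S⟩ : S) = ⟨ρ x, hxS⟩ from Subtype.ext hρx', linePart_smul, hcx,
    smul_smul] at hcx'
  have hxx' : x' = x := by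
    rw [← x.mk_rep, ← x'.mk_rep, Projectivization.mk_eq_mk_iff']
    exact ⟨c'⁻¹ * (t * c), by rw [mul_smul, hcx', smul_smul, inv_mul_cancel₀ hc', one_smul]⟩
  exact hxx' ▸ hx'

variable {L : Fin m → Submodule F (Fin k → F)}

theorem CrossingCircuit.injOn (hρ : ∀ x i, x.submodule ≤ L i → x.submodule ≤ L (ρ x))
    (hD : CrossingCircuit L D) : Set.InjOn ρ D := by
  intro x hx y hy hxy
  have hxL : x.submodule ≤ L (ρ x) := let ⟨i, hi⟩ := hD.2.1 x hx; hρ x i hi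
  have hyL : y.submodule ≤ L (ρ x) := let ⟨i, hi⟩ := hD.2.1 y hy; hxy ▸ hρ y i hi
  exact card_le_one.1 (hD.2.2 (ρ x)) x (mem_filter.2 ⟨hx, hxL⟩) y (mem_filter.2 ⟨hy, hyL⟩)

theorem CrossingCircuit.exists_lineRelation (hL : ∀ i, L i = Submodule.span F {P i, Q i})
    (hρ : ∀ x i, x.submodule ≤ L i → x.submodule ≤ L (ρ x)) (hD : CrossingCircuit L D)
    (hS : D.image ρ = S) : ∃ w, lineComb P Q S w = 0 ∧ IsLineRelation P Q ρ S D w := by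
  obtain ⟨g, hg, hg0⟩ := hD.1.exists_relation
  have hcoord : ∀ x ∈ D, ∃ a b : F, a • P (ρ x) + b • Q (ρ x) = x.rep := by
    intro x hx
    obtain ⟨i, hi⟩ := hD.2.1 x hx
    have hxL := hρ x i hi
    rw [x.submodule_eq, Submodule.span_singleton_le_iff_mem, hL] at hxL
    exact Submodule.mem_span_pair.1 hxL
  choose! a b hab using hcoord
  set w : S ⊕ S → F := Sum.elim (fun i => ∑ x ∈ D with ρ x = i, g x * a x)
    (fun i => ∑ x ∈ D with ρ x = i, g x * b x)
  have hpart (i : S) : linePart P Q S w i = ∑ x ∈ D with ρ x = i, g x • x.rep := by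
    simp only [linePart, w, Sum.elim_inl, Sum.elim_inr, sum_smul, ← sum_add_distrib]
    refine sum_congr rfl fun x hx => ?_
    obtain ⟨hxD, hρx⟩ := mem_filter.1 hx
    rw [← hρx, mul_smul, mul_smul, ← smul_add, hab x hxD]
  have hmaps : ∀ x ∈ D, ρ x ∈ S := fun x hx => hS ▸ mem_image_of_mem ρ hx
  refine ⟨w, ?_, fun x hx => ⟨hmaps x hx, g x, hg0 x hx, ?_⟩⟩
  · rw [lineComb_apply, sum_congr rfl fun i _ => hpart i,
      sum_coe_sort S fun i => ∑ x ∈ D with ρ x = i, g x • x.rep,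
      sum_fiberwise_of_maps_to hmaps, hg]
  · have hfiber : {y ∈ D | ρ y = ρ x} = {x} := by
      ext y
      simp only [mem_filter, mem_singleton]
      exact ⟨fun h => hD.injOn hρ h.1 hx h.2, by rintro rfl; exact ⟨hx, rfl⟩⟩
    rw [hpart, hfiber, sum_singleton]

theorem card_crossingCircuits_image_eq_le [Finite F]
    (hL : ∀ i, L i = Submodule.span F {P i, Q i})
    (hρ : ∀ x i, x.submodule ≤ L i → x.submodule ≤ L (ρ x))
    (hS : S.Nonempty) {C : Finset (Finset (Pt F k))}
    (hC : ∀ D ∈ C, CrossingCircuit L D ∧ D.image ρ = S) :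
    #C ≤ Nat.card (ℙ F (LinearMap.ker (lineComb P Q S))) := by
  have hrel (D : C) : ∃ w, lineComb P Q S w = 0 ∧ IsLineRelation P Q ρ S D w :=
    (hC D D.2).1.exists_lineRelation hL hρ (hC D D.2).2
  choose w hker hw using hrel
  have hne (D : C) : (⟨w D, hker D⟩ : LinearMap.ker (lineComb P Q S)) ≠ 0 := fun h =>
    (hw D).ne_zero (image_nonempty.1 ((hC D D.2).2 ▸ hS)) (congrArg Subtype.val h)
  have hcard (D : C) : #(D : Finset (Pt F k)) = #S := by
    rw [← (hC D D.2).2, card_image_of_injOn ((hC D D.2).1.injOn hρ)]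
  have hinj : Function.Injective fun D : C => Projectivization.mk F _ (hne D) := by
    intro D D' h
    obtain ⟨t, ht⟩ := (Projectivization.mk_eq_mk_iff' _ _ _ _ _).1 h
    have hwt : t • w D' = w D := congrArg Subtype.val ht
    have hsub := (hw D').subset_of_smul (hwt ▸ hw D) (hC D D.2).2.ge
    exact Subtype.ext (eq_of_subset_of_card_le hsub (by rw [hcard, hcard])).symm
  rw [← Nat.card_eq_finsetCard]
  exact Nat.card_le_card_of_injective _ hinj

end LineConfiguration

theorem geom_sum_le_add_one_pow (q n : ℕ) : ∑ i ∈ range (n + 1), q ^ i ≤ (q + 1) ^ n := by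
  rw [add_pow]
  refine sum_le_sum fun i hi => ?_
  rw [one_pow, mul_one]
  exact Nat.le_mul_of_pos_right _ (Nat.choose_pos (Nat.lt_succ_iff.1 (mem_range.1 hi)))

theorem exists_lineIndex {k : ℕ} {ι : Type*} [Nonempty ι] (L : ι → Submodule F (Fin k → F)) :
    ∃ ρ : Pt F k → ι, ∀ x i, x.submodule ≤ L i → x.submodule ≤ L (ρ x) := by
  have hex (x : Pt F k) : ∃ j, ∀ i, x.submodule ≤ L i → x.submodule ≤ L j := by
    by_cases h : ∃ i, x.submodule ≤ L i
    · obtain ⟨i, hi⟩ := h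
      exact ⟨i, fun _ _ => hi⟩
    · exact ⟨Classical.arbitrary ι, fun i hi => (h ⟨i, hi⟩).elim⟩
  choose ρ hρ using hex
  exact ⟨ρ, hρ⟩

theorem card_crossingCircuits_le [Finite F] {k m : ℕ} {P Q : Fin m → Fin k → F}
    (hgen : InGeneralPosition (Sum.elim P Q)) {L : Fin m → Submodule F (Fin k → F)}
    (hL : ∀ i, L i = Submodule.span F {P i, Q i}) {u : ℕ} (hu : k < 2 * u)
    {C : Finset (Finset (Pt F k))} (hC : ∀ D ∈ C, CrossingCircuit L D ∧ #D = u) :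
    #C ≤ m.choose u * (Nat.card F + 1) ^ (2 * u - k - 1) := by
  obtain rfl | ⟨D₀, hD₀⟩ := C.eq_empty_or_nonempty
  · simp
  have : Nonempty (Fin m) := by
    obtain ⟨x, hx⟩ := card_pos.1 ((hC D₀ hD₀).2 ▸ (by omega : 0 < u))
    obtain ⟨i, -⟩ := (hC D₀ hD₀).1.2.1 x hx
    exact ⟨i⟩
  obtain ⟨ρ, hρ⟩ := exists_lineIndex L
  have hmaps : ∀ D ∈ C, D.image ρ ∈ (univ : Finset (Fin m)).powersetCard u := fun D hD =>
    mem_powersetCard.2 ⟨subset_univ _, by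
      rw [card_image_of_injOn ((hC D hD).1.injOn hρ), (hC D hD).2]⟩
  have hfiber : ∀ S ∈ (univ : Finset (Fin m)).powersetCard u,
      #{D ∈ C | D.image ρ = S} ≤ (Nat.card F + 1) ^ (2 * u - k - 1) := by
    intro S hS
    have hSu := (mem_powersetCard.1 hS).2
    calc #{D ∈ C | D.image ρ = S}
        ≤ Nat.card (ℙ F (LinearMap.ker (lineComb P Q S))) :=
          card_crossingCircuits_image_eq_le hL hρ (card_pos.1 (by omega))
            fun D hD => ⟨(hC D (mem_filter.1 hD).1).1, (mem_filter.1 hD).2⟩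
      _ = ∑ i ∈ range (2 * u - k - 1 + 1), Nat.card F ^ i :=
          Projectivization.card_of_finrank F _ (by
            rw [finrank_ker_lineComb P Q hgen (by omega)]
            omega)
      _ ≤ _ := geom_sum_le_add_one_pow _ _
  have h := card_le_mul_card_image_of_maps_to hmaps _ hfiber
  rwa [card_powersetCard, card_univ, Fintype.card_fin, mul_comm] at h

theorem cast_choose_mul_choose {m u j : ℕ} (hju : j ≤ u) (hum : u ≤ m) :
    (m.choose u * u.choose j : ℝ) =
      m.factorial / (j.factorial * (u - j).factorial * (m - u).factorial) := by
  rw [Nat.cast_choose ℝ hum, Nat.cast_choose ℝ hju]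
  field_simp

theorem pow_mul_mul_rpow_neg_pow {Q : ℝ} (hQ : 0 < Q) (c α : ℝ) {j : ℕ} (hj : 1 ≤ j) :
    Q ^ (j - 1) * (c * Q ^ (-α)) ^ j = c ^ j * Q ^ ((1 - α) * j - 1) := by
  rw [mul_pow, ← Real.rpow_natCast (Q ^ (-α)), ← Real.rpow_mul hQ.le, ← Real.rpow_natCast Q,
    Nat.cast_sub hj, mul_left_comm, ← Real.rpow_add hQ]
  ring_nf

theorem statement13_general [Fintype F] {m k : ℕ} (hk4 : 4 ≤ k) (hmk : m ≤ k)
    (P Q : Fin m → (Fin k → F))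
    (hgen : ∀ T : Finset (Fin m ⊕ Fin m), T.card ≤ k →
      LinearIndependent F (fun t : {x // x ∈ T} => Sum.elim P Q (t : Fin m ⊕ Fin m)))
    (L : Fin m → Submodule F (Fin k → F))
    (hL : ∀ i, L i = Submodule.span F {P i, Q i})
    (ΩF : Finset (Pt F k)) (hΩF : ∀ x, x ∈ ΩF ↔ ∃ i, x.submodule ≤ L i)
    (Qr : ℝ) (hQr : Qr = (Fintype.card F : ℝ) + 1)
    (c α : ℝ)
    (p : ℝ) (hp : p = c * Qr ^ (-α)) (hp0 : 0 < p) :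
    (∀ i, expec p ΩF (fun Γ => (Vline (L i) Γ : ℝ)) = c * Qr ^ (1 - α)) ∧
    (∀ u : ℕ, k + 1 ≤ 2 * u → u ≤ m →
      expec p ΩF (fun Γ => (Xu L u Γ : ℝ)) ≤
        c ^ (2 * u - k) *
          ((m.factorial : ℝ) /
            (((2 * u - k).factorial : ℝ) * ((u - (2 * u - k)).factorial : ℝ) *
              ((m - u).factorial : ℝ))) *
          Qr ^ ((1 - α) * ((2 * u - k : ℕ) : ℝ) - 1)) := by
  have hgen' : InGeneralPosition (Sum.elim P Q) := hgen
  have hQr0 : 0 < Qr := by rw [hQr]; positivity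
  have hQr' : ((Nat.card F + 1 : ℕ) : ℝ) = Qr := by
    rw [hQr, Nat.card_eq_fintype_card, Nat.cast_add_one]
  refine ⟨fun i => ?_, fun u hu hum => ?_⟩
  · have hrank : Module.finrank F (L i) = 2 :=
      hL i ▸ hgen'.finrank_span_pair (a := .inl i) (b := .inr i) (by omega) Sum.inl_ne_inr
    rw [expec_Vline, Projectivization.card_points_of_finrank_two hrank _ fun x => by
      simp only [mem_filter, hΩF]; exact ⟨And.right, fun h => ⟨⟨i, h⟩, h⟩⟩, hQr', hp,
      sub_eq_add_neg, Real.rpow_add hQr0, Real.rpow_one]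
    ring
  · set j := 2 * u - k
    have hC := card_crossingCircuits_le hgen' hL (u := u) (by omega)
      (C := {D ∈ ΩF.powerset | CrossingCircuit L D ∧ #D = u}) fun D hD => (mem_filter.1 hD).2
    rw [expec_Xu p fun x i h => (hΩF x).2 ⟨i, h⟩]
    calc _ ≤ ((m.choose u * (Nat.card F + 1) ^ (j - 1) : ℕ) : ℝ) * u.choose j * p ^ j := by
          gcongr
      _ = _ := by
        rw [Nat.cast_mul, Nat.cast_pow, hQr', hp, ← cast_choose_mul_choose (by omega) hum]
        linear_combination (m.choose u * u.choose j : ℝ) *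
          pow_mul_mul_rpow_neg_pow hQr0 c α (j := j) (by omega)

/-- for `p = c·Q^{-α}`, (a) `E[V_i] = c·Q^{1-α}` for each line, and
(b) `E[X_u] ≤ c^j · m!/(j!(u-j)!(m-u)!) · Q^{(1-α)j - 1}` where `j = 2u - k`, for each
`u` with `⌈(k+1)/2⌉ ≤ u ≤ m`. -/
theorem statement13 [Fintype F] {m k s : ℕ} (hm : 2 ≤ m) (hk4 : 4 ≤ k)
    (hkm : k + 1 ≤ 2 * m) (hmk : m ≤ k) (hs : k + s = 2 * m)
    (P Q : Fin m → (Fin k → F))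
    (hgen : ∀ T : Finset (Fin m ⊕ Fin m), T.card ≤ k →
      LinearIndependent F (fun t : {x // x ∈ T} => Sum.elim P Q (t : Fin m ⊕ Fin m)))
    (L : Fin m → Submodule F (Fin k → F))
    (hL : ∀ i, L i = Submodule.span F {P i, Q i})
    (ΩF : Finset (Pt F k)) (hΩF : ∀ x, x ∈ ΩF ↔ ∃ i, x.submodule ≤ L i)
    (Qr : ℝ) (hQr : Qr = (Fintype.card F : ℝ) + 1)
    (c α : ℝ) (hc : 0 < c) (hα : 0 < α)
    (p : ℝ) (hp : p = c * Qr ^ (-α)) (hp0 : 0 < p) (hp1 : p < 1) :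
    (∀ i, expec p ΩF (fun Γ => (Vline (L i) Γ : ℝ)) = c * Qr ^ (1 - α)) ∧
    (∀ u : ℕ, k + 1 ≤ 2 * u → u ≤ m →
      expec p ΩF (fun Γ => (Xu L u Γ : ℝ)) ≤
        c ^ (2 * u - k) *
          ((m.factorial : ℝ) /
            (((2 * u - k).factorial : ℝ) * ((u - (2 * u - k)).factorial : ℝ) *
              ((m - u).factorial : ℝ))) *
          Qr ^ ((1 - α) * ((2 * u - k : ℕ) : ℝ) - 1)) :=
  statement13_general hk4 hmk P Q hgen L hL ΩF hΩF Qr hQr c α p hp hp0
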